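/- The key determinant identities hold: for every r ∈ ℝ³, the determinant of the 3×3 matrix with columns f₁(r), f₃(r), f₅(r) equals (r_y² − r_z³ + r_z²)·(γ/ω), and the determinant of the 3×3 matrix with columns f₁(r), f₃(r), f₆(r) equals 3 r_y r_z²·(γ/ω). -/

import Mathlib

/-! The fields `f₀` and `f₁` are affine, and affine vector fields are closed under the Lie
bracket: `[x ↦ A x + c, x ↦ B x + d] = x ↦ (A B − B A) x + (A d − B c)`. Hence `f₃`, `f₅`, `f₆`
are affine with explicitly computable matrices and offsets, and both determinants become
polynomial identities in `r` and `γ / ω`. -/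

open MeasureTheory Set

noncomputable section

/-- The state space: Bloch vectors in `ℝ³` with the Euclidean norm. -/
abbrev Pt := EuclideanSpace ℝ (Fin 3)

/-- The drift vector field `f₀`. -/
def f0 (ω γ : ℝ) (r : Pt) : Pt :=
  WithLp.toLp 2 ![-r 1 - (γ / (2 * ω)) * r 0, r 0 - (γ / (2 * ω)) * r 1, (γ / ω) * (1 - r 2)]

/-- The coherent-control vector field `f₁` (infinitesimal rotation about the `r_x`-axis). -/
def f1 (r : Pt) : Pt := WithLp.toLp 2 ![0, -r 2, r 1]

/-- The incoherent-control vector field `f₂`. -/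
def f2 (r : Pt) : Pt := WithLp.toLp 2 ![-r 0 / 2, -r 1 / 2, -r 2]

/-- Lie bracket of vector fields on `ℝ³`: `[f,g](r) = Df(r)·g(r) − Dg(r)·f(r)`. -/
def lieB (f g : Pt → Pt) (r : Pt) : Pt := fderiv ℝ f r (g r) - fderiv ℝ g r (f r)

open Matrix

def affineField (A : Matrix (Fin 3) (Fin 3) ℝ) (c r : Pt) : Pt :=
  toEuclideanCLM (𝕜 := ℝ) A r + c

lemma fderiv_affineField (A : Matrix (Fin 3) (Fin 3) ℝ) (c r : Pt) :
    fderiv ℝ (affineField A c) r = toEuclideanCLM (𝕜 := ℝ) A :=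
  ((toEuclideanCLM (𝕜 := ℝ) A).hasFDerivAt.add_const c).fderiv

lemma lieB_affineField (A B : Matrix (Fin 3) (Fin 3) ℝ) (c d : Pt) :
    lieB (affineField A c) (affineField B d) =
      affineField (A * B - B * A)
        (toEuclideanCLM (𝕜 := ℝ) A d - toEuclideanCLM (𝕜 := ℝ) B c) := by
  funext r
  simp only [lieB, fderiv_affineField, affineField, map_sub, map_mul, map_add,
    _root_.sub_apply, mul_apply_eq_comp]
  abel

lemma f0_eq_affineField (ω γ : ℝ) :
    f0 ω γ = affineField !![-(γ / (2 * ω)), -1, 0; 1, -(γ / (2 * ω)), 0; 0, 0, -(γ / ω)]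
      !₂[0, 0, γ / ω] := by
  funext r
  ext i
  fin_cases i <;> simp [f0, affineField, ofLp_toEuclideanCLM, vecHead, vecTail] <;> ring

lemma f1_eq_affineField : f1 = affineField !![0, 0, 0; 0, 0, -1; 0, 1, 0] 0 := by
  funext r
  ext i
  fin_cases i <;> simp [f1, affineField, ofLp_toEuclideanCLM, vecHead, vecTail]

lemma lieB_f0_f1 (ω γ : ℝ) :
    lieB (f0 ω γ) f1 = affineField !![0, 0, 1; 0, 0, -(γ / ω) / 2; -1, -(γ / ω) / 2, 0]
      !₂[0, γ / ω, 0] := by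
  rw [f0_eq_affineField, f1_eq_affineField, lieB_affineField]
  congr 1
  · ext i j
    fin_cases i <;> fin_cases j <;> simp <;> ring
  · ext i
    fin_cases i <;> simp [vecHead, vecTail]

lemma lieB_f1_lieB_f0_f1 (ω γ : ℝ) :
    lieB f1 (lieB (f0 ω γ) f1) = affineField !![0, -1, 0; 1, γ / ω, 0; 0, 0, -(γ / ω)]
      !₂[0, 0, γ / ω] := by
  rw [lieB_f0_f1, f1_eq_affineField, lieB_affineField]
  congr 1
  · ext i j
    fin_cases i <;> fin_cases j <;> simp
    ring
  · ext i
    fin_cases i <;> simp [vecHead, vecTail]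

lemma lieB_f1_lieB_f1_lieB_f0_f1 (ω γ : ℝ) :
    lieB f1 (lieB f1 (lieB (f0 ω γ) f1)) =
      affineField !![0, 0, -1; 0, 0, 2 * (γ / ω); 1, 2 * (γ / ω), 0] !₂[0, -(γ / ω), 0] := by
  rw [lieB_f1_lieB_f0_f1, f1_eq_affineField, lieB_affineField]
  congr 1
  · ext i j
    fin_cases i <;> fin_cases j <;> simp <;> ring
  · ext i
    fin_cases i <;> simp [vecHead, vecTail]

theorem det_identities_general (ω γ : ℝ) (r : Pt) :
    (Matrix.of fun i j : Fin 3 =>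
        ![f1 r, lieB (f0 ω γ) f1 r, lieB f1 (lieB (f0 ω γ) f1) r] j i).det
      = (r 1 ^ 2 - r 2 ^ 3 + r 2 ^ 2) * (γ / ω) ∧
    (Matrix.of fun i j : Fin 3 =>
        ![f1 r, lieB (f0 ω γ) f1 r,
          lieB f1 (lieB f1 (lieB (f0 ω γ) f1)) r] j i).det
      = 3 * r 1 * r 2 ^ 2 * (γ / ω) := by
  rw [lieB_f1_lieB_f1_lieB_f0_f1, lieB_f1_lieB_f0_f1, lieB_f0_f1]
  constructor <;>
  · simp only [det_fin_three, of_apply, cons_val_zero, cons_val_one, cons_val, f1, affineField,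
      PiLp.add_apply, ofLp_toEuclideanCLM, cons_mulVec, cons_dotProduct, empty_mulVec,
      dotProduct_of_isEmpty, vecHead, vecTail, Function.comp_apply, Fin.succ_zero_eq_one,
      Fin.succ_one_eq_two]
    ring

/-- The key determinant identities: with `f₃ = [f₀,f₁]`, `f₅ = [f₁,f₃]`, `f₆ = [f₁,f₅]`,
the determinant of the matrix with columns `f₁(r), f₃(r), f₅(r)` is
`(r_y² − r_z³ + r_z²)(γ/ω)`, and the determinant of the matrix with columns
`f₁(r), f₃(r), f₆(r)` is `3 r_y r_z² (γ/ω)`. -/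
theorem det_identities (ω γ : ℝ) (hω : 0 < ω) (hγ : 0 ≤ γ) (r : Pt) :
    (Matrix.of fun i j : Fin 3 =>
        ![f1 r, lieB (f0 ω γ) f1 r, lieB f1 (lieB (f0 ω γ) f1) r] j i).det
      = (r 1 ^ 2 - r 2 ^ 3 + r 2 ^ 2) * (γ / ω) ∧
    (Matrix.of fun i j : Fin 3 =>
        ![f1 r, lieB (f0 ω γ) f1 r,
          lieB f1 (lieB f1 (lieB (f0 ω γ) f1)) r] j i).det
      = 3 * r 1 * r 2 ^ 2 * (γ / ω) :=
  det_identities_general ω γ r
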